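/- arXiv:1901.07516 — 2 statements merged into one kernel-verified Lean document; each statement's English description precedes it below -/
import Mathlib

section
/- Let H be a real Hilbert space and V_1,…,V_N closed subspaces of H such that each V_i is either finite-dimensional or finite-codimensional (i.e., V_i^⊥ is finite-dimensional). Then (V_1,…,V_N) is innately regular: for every nonempty I ⊆ {1,…,N} there exists a constant κ_I < ∞ such that d(x, ⋂_{i∈I} V_i) ≤ κ_I · max_{i∈I} d(x, V_i) for all x ∈ H. -/
/-!
For closed subspaces `A`, `B` put `C = A ⊓ (A ⊓ B)ᗮ`. Since `C ⊓ B = ⊥`, the quotient map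
`H → H ⧸ B` is injective on `C`; if `C` is finite-dimensional it is therefore bounded below
there, i.e. `‖c‖ ≤ κ d(c, B)` on `C`. Splitting `P_A x = p + c` with `p ∈ A ⊓ B`, `c ∈ C` gives
`d(x, A ⊓ B) ≤ d(x, A) + ‖c‖ ≤ d(x, A) + κ (d(x, B) + d(x, A))`.
The subspace `C` is finite-dimensional as soon as `A` is or `(A ⊓ B)ᗮ = Aᗮ ⊔ Bᗮ` is, and the
class of closed subspaces that are finite-dimensional or finite-codimensional is stable under
`⊓`, so induction on `I` gives the theorem.
-/

open Metric

theorem infDist_sub_of_mem {M : Type*} [SeminormedAddCommGroup M] (S : AddSubgroup M) (x : M)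
    {y : M} (hy : y ∈ S) : infDist (x - y) S = infDist x S := by
  rw [← QuotientAddGroup.norm_mk, ← QuotientAddGroup.norm_mk, QuotientAddGroup.mk_sub,
    (QuotientAddGroup.eq_zero_iff y).2 hy, sub_zero]

theorem exists_norm_le_mul_infDist_of_disjoint {E : Type*} [NormedAddCommGroup E]
    [NormedSpace ℝ E] {C B : Submodule ℝ E} [FiniteDimensional ℝ C] [IsClosed (B : Set E)]
    (hCB : Disjoint C B) : ∃ κ : ℝ, 0 ≤ κ ∧ ∀ c ∈ C, ‖c‖ ≤ κ * infDist c (B : Set E) := by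
  have hker : LinearMap.ker (B.mkQ ∘ₗ C.subtype) = ⊥ := by
    rwa [LinearMap.ker_comp, Submodule.ker_mkQ, ← Submodule.disjoint_iff_comap_eq_bot]
  obtain ⟨K, -, hK⟩ := (B.mkQ ∘ₗ C.subtype).exists_antilipschitzWith hker
  refine ⟨K, K.coe_nonneg, fun c hc => ?_⟩
  calc ‖c‖ ≤ K * ‖B.mkQ c‖ := ZeroHomClass.bound_of_antilipschitz _ hK ⟨c, hc⟩
    _ = K * infDist c B := congrArg _ (QuotientAddGroup.norm_mk (S := B.toAddSubgroup) c)

section InnerProductSpace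

variable {H : Type*} [NormedAddCommGroup H] [InnerProductSpace ℝ H]

theorem infDist_eq_norm_sub_starProjection (K : Submodule ℝ H) [K.HasOrthogonalProjection]
    (x : H) : infDist x K = ‖x - K.starProjection x‖ := by
  rw [infDist_eq_iInf, Submodule.starProjection_minimal]
  simp only [dist_eq_norm]
  rfl

theorem exists_infDist_inf_le_mul_max_of_finiteDimensional (A B : Submodule ℝ H)
    [A.HasOrthogonalProjection] [(A ⊓ B).HasOrthogonalProjection] [IsClosed (B : Set H)]
    [FiniteDimensional ℝ (A ⊓ (A ⊓ B)ᗮ : Submodule ℝ H)] :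
    ∃ κ : ℝ, 0 ≤ κ ∧ ∀ x : H, infDist x (A ⊓ B : Submodule ℝ H) ≤
      κ * max (infDist x A) (infDist x B) := by
  obtain ⟨κ, hκ, hC⟩ := exists_norm_le_mul_infDist_of_disjoint (C := A ⊓ (A ⊓ B)ᗮ) (B := B) <| by
    refine Submodule.disjoint_def.2 fun c ⟨hcA, hcO⟩ hcB => ?_
    exact Submodule.disjoint_def.1 (Submodule.orthogonal_disjoint (A ⊓ B)) c ⟨hcA, hcB⟩ hcO
  have hA : ∀ a ∈ A, infDist a (A ⊓ B : Submodule ℝ H) ≤ κ * infDist a B := by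
    intro a ha
    have hp : (A ⊓ B).starProjection a ∈ A ⊓ B := Submodule.starProjection_apply_mem _ _
    calc infDist a (A ⊓ B : Submodule ℝ H) = ‖a - (A ⊓ B).starProjection a‖ :=
          infDist_eq_norm_sub_starProjection _ a
      _ ≤ κ * infDist (a - (A ⊓ B).starProjection a) B :=
          hC _ ⟨A.sub_mem ha hp.1, Submodule.sub_starProjection_mem_orthogonal a⟩
      _ = κ * infDist a B := congrArg _ (infDist_sub_of_mem B.toAddSubgroup a hp.2)
  refine ⟨1 + 2 * κ, by positivity, fun x => ?_⟩
  set a := A.starProjection x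
  have hxa : dist x a = infDist x A := by
    rw [dist_eq_norm, infDist_eq_norm_sub_starProjection]
  have haB : infDist a B ≤ infDist x B + infDist x A := by
    rw [← hxa, dist_comm]
    exact infDist_le_infDist_add_dist
  set m := max (infDist x A) (infDist x B)
  have hAm : infDist x A ≤ m := le_max_left _ _
  have hBm : infDist x B ≤ m := le_max_right _ _
  calc infDist x (A ⊓ B : Submodule ℝ H)
      ≤ infDist a (A ⊓ B : Submodule ℝ H) + dist x a := infDist_le_infDist_add_dist
    _ ≤ κ * (infDist x B + infDist x A) + infDist x A := by
        rw [hxa]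
        gcongr
        exact (hA a (A.starProjection_apply_mem x)).trans (by gcongr)
    _ ≤ κ * (m + m) + m := by gcongr
    _ = (1 + 2 * κ) * m := by ring

end InnerProductSpace

section CompleteSubmodule

variable {R E : Type*} [Semiring R] [UniformSpace E] [T0Space E] [AddCommMonoid E] [Module R E]

instance Submodule.isClosed_of_completeSpace (K : Submodule R E) [CompleteSpace K] :
    IsClosed (K : Set E) :=
  (completeSpace_coe_iff_isComplete.1 ‹_›).isClosed

variable [CompleteSpace E]

instance Submodule.completeSpace_inf (A B : Submodule R E) [CompleteSpace A] [CompleteSpace B] :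
    CompleteSpace (A ⊓ B : Submodule R E) :=
  completeSpace_coe_iff_isComplete.2
    (A.isClosed_of_completeSpace.inter B.isClosed_of_completeSpace).isComplete

instance Submodule.completeSpace_iInf {ι : Sort*} (K : ι → Submodule R E)
    [∀ i, CompleteSpace (K i)] : CompleteSpace (⨅ i, K i : Submodule R E) :=
  completeSpace_coe_iff_isComplete.2 <| by
    rw [Submodule.coe_iInf]
    exact (isClosed_iInter fun i => Submodule.isClosed_of_completeSpace (K i)).isComplete

end CompleteSubmodule

section Hilbert

variable {H : Type*} [NormedAddCommGroup H] [InnerProductSpace ℝ H] [CompleteSpace H]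

theorem finiteDimensional_orthogonal_inf (A B : Submodule ℝ H) [CompleteSpace A] [CompleteSpace B]
    [FiniteDimensional ℝ Aᗮ] [FiniteDimensional ℝ Bᗮ] :
    FiniteDimensional ℝ (A ⊓ B : Submodule ℝ H)ᗮ := by
  have : A ⊓ B = (Aᗮ ⊔ Bᗮ)ᗮ := by
    rw [← Submodule.inf_orthogonal, A.orthogonal_orthogonal, B.orthogonal_orthogonal]
  rw [this, Submodule.orthogonal_orthogonal]
  infer_instance

theorem finiteDimensional_or_orthogonal_inf {A B : Submodule ℝ H} [CompleteSpace A]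
    [CompleteSpace B] (hA : FiniteDimensional ℝ A ∨ FiniteDimensional ℝ Aᗮ)
    (hB : FiniteDimensional ℝ B ∨ FiniteDimensional ℝ Bᗮ) :
    FiniteDimensional ℝ (A ⊓ B : Submodule ℝ H) ∨
      FiniteDimensional ℝ (A ⊓ B : Submodule ℝ H)ᗮ := by
  rcases hA with hA | hA
  · exact .inl (Submodule.finiteDimensional_of_le inf_le_left)
  rcases hB with hB | hB
  · exact .inl (Submodule.finiteDimensional_of_le inf_le_right)
  · exact .inr (finiteDimensional_orthogonal_inf A B)

theorem exists_infDist_inf_le_mul_max_of_finiteDimensional_or_orthogonal {A B : Submodule ℝ H}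
    [CompleteSpace A] [CompleteSpace B] (hA : FiniteDimensional ℝ A ∨ FiniteDimensional ℝ Aᗮ)
    (hB : FiniteDimensional ℝ B ∨ FiniteDimensional ℝ Bᗮ) :
    ∃ κ : ℝ, 0 ≤ κ ∧ ∀ x : H, infDist x (A ⊓ B : Submodule ℝ H) ≤
      κ * max (infDist x A) (infDist x B) := by
  rcases hA with hA | hA
  · have : FiniteDimensional ℝ (A ⊓ (A ⊓ B)ᗮ : Submodule ℝ H) :=
      Submodule.finiteDimensional_of_le inf_le_left
    exact exists_infDist_inf_le_mul_max_of_finiteDimensional A B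
  rcases hB with hB | hB
  · have : FiniteDimensional ℝ (B ⊓ (B ⊓ A)ᗮ : Submodule ℝ H) :=
      Submodule.finiteDimensional_of_le inf_le_left
    simpa only [inf_comm B, max_comm] using
      exists_infDist_inf_le_mul_max_of_finiteDimensional B A
  · have := finiteDimensional_orthogonal_inf A B
    have : FiniteDimensional ℝ (A ⊓ (A ⊓ B)ᗮ : Submodule ℝ H) :=
      Submodule.finiteDimensional_of_le inf_le_right
    exact exists_infDist_inf_le_mul_max_of_finiteDimensional A B

variable {ι : Type*} (V : ι → Submodule ℝ H) [∀ i, CompleteSpace (V i)]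

theorem finiteDimensional_or_orthogonal_biInf
    (hV : ∀ i, FiniteDimensional ℝ (V i) ∨ FiniteDimensional ℝ (V i)ᗮ) (s : Finset ι) :
    FiniteDimensional ℝ (⨅ i ∈ s, V i : Submodule ℝ H) ∨
      FiniteDimensional ℝ (⨅ i ∈ s, V i : Submodule ℝ H)ᗮ := by
  classical
  induction s using Finset.induction_on with
  | empty =>
    have htop : (⨅ i ∈ (∅ : Finset ι), V i) = ⊤ := by simp
    rw [htop, Submodule.top_orthogonal_eq_bot]
    exact .inr inferInstance
  | insert a s _ ih =>
    rw [Finset.iInf_insert]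
    exact finiteDimensional_or_orthogonal_inf (hV a) ih

theorem exists_infDist_biInf_le_mul_sup'
    (hV : ∀ i, FiniteDimensional ℝ (V i) ∨ FiniteDimensional ℝ (V i)ᗮ) (s : Finset ι)
    (hs : s.Nonempty) :
    ∃ κ : ℝ, 0 ≤ κ ∧ ∀ x : H, infDist x (⨅ i ∈ s, V i : Submodule ℝ H) ≤
      κ * s.sup' hs (fun i => infDist x (V i)) := by
  induction hs using Finset.Nonempty.cons_induction with
  | singleton a => exact ⟨1, zero_le_one, fun x => by simp⟩
  | cons a s ha hs ih =>
    obtain ⟨κ', hκ', hs'⟩ := ih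
    obtain ⟨κ, hκ, h⟩ := exists_infDist_inf_le_mul_max_of_finiteDimensional_or_orthogonal (hV a)
      (finiteDimensional_or_orthogonal_biInf V hV s)
    refine ⟨κ * max 1 κ', by positivity, fun x => ?_⟩
    classical
    have hcons : (⨅ i ∈ Finset.cons a s ha, V i : Submodule ℝ H) = V a ⊓ ⨅ i ∈ s, V i := by
      rw [Finset.cons_eq_insert, Finset.iInf_insert]
    set M := s.sup' hs (fun i => infDist x (V i))
    have hM : 0 ≤ max (infDist x (V a)) M := infDist_nonneg.trans (le_max_left _ _)
    rw [hcons, Finset.sup'_cons hs]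
    calc infDist x (V a ⊓ ⨅ i ∈ s, V i : Submodule ℝ H)
        ≤ κ * max (infDist x (V a)) (infDist x (⨅ i ∈ s, V i : Submodule ℝ H)) := h x
      _ ≤ κ * max (infDist x (V a)) (κ' * M) := by gcongr; exact hs' x
      _ ≤ κ * (max 1 κ' * max (infDist x (V a)) M) := by
        gcongr
        refine max_le ?_ ?_
        · exact (le_max_left _ _).trans (le_mul_of_one_le_left hM (le_max_left _ _))
        · exact (mul_le_mul_of_nonneg_left (le_max_right _ _) hκ').trans
            (mul_le_mul_of_nonneg_right (le_max_right _ _) hM)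
      _ = κ * max 1 κ' * max (infDist x (V a)) M := by ring

end Hilbert

theorem stmt_5_general {H : Type*} [NormedAddCommGroup H] [InnerProductSpace ℝ H] [CompleteSpace H]
    (N : ℕ) (V : Fin N → Submodule ℝ H) [∀ i, CompleteSpace (V i)]
    (hfin : ∀ i, FiniteDimensional ℝ (V i) ∨ FiniteDimensional ℝ ((V i)ᗮ)) :
    ∀ (I : Finset (Fin N)) (hI : I.Nonempty), ∃ κ : ℝ,
      ∀ x : H, infDist x ((⨅ i ∈ I, V i : Submodule ℝ H) : Set H) ≤
        κ * I.sup' hI (fun i => infDist x (V i : Set H)) := by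
  intro I hI
  obtain ⟨κ, -, hκ⟩ := exists_infDist_biInf_le_mul_sup' V hfin I hI
  exact ⟨κ, hκ⟩

/-- a collection of closed subspaces each of which is finite-dimensional or
finite-codimensional is innately regular. -/
theorem stmt_5 {H : Type*} [NormedAddCommGroup H] [InnerProductSpace ℝ H] [CompleteSpace H]
    (N : ℕ) (hN : 1 ≤ N) (V : Fin N → Submodule ℝ H) [∀ i, CompleteSpace (V i)]
    (hfin : ∀ i, FiniteDimensional ℝ (V i) ∨ FiniteDimensional ℝ ((V i)ᗮ)) :
    ∀ (I : Finset (Fin N)) (hI : I.Nonempty), ∃ κ : ℝ,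
      ∀ x : H, infDist x ((⨅ i ∈ I, V i : Submodule ℝ H) : Set H) ≤
        κ * I.sup' hI (fun i => infDist x (V i : Set H)) :=
  stmt_5_general N V hfin
end

section
/- Let V be a closed subspace of a real Hilbert space H, let λ ∈ [0,2] and ε ∈ [0,1]. Then for every x ∈ H with d(x,V) ≥ ε·‖x‖, one has ‖P_{V,λ}x‖ ≤ (1 − λ(2−λ)ε²)^{1/2}·‖x‖. -/
open Metric
open scoped InnerProductSpace

noncomputable def relaxProj {H : Type*} [NormedAddCommGroup H] [InnerProductSpace ℝ H]
    (V : Submodule ℝ H) [V.HasOrthogonalProjection] (l : ℝ) (x : H) : H :=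
  (1 - l) • x + l • (V.orthogonalProjectionOnto x : H)

/-! The residual `q = x - P_V x` is orthogonal to `V`, so `⟪x, q⟫ = ‖q‖²`, and
`P_{V,λ} x = x - λ q` has squared norm `‖x‖² - λ(2-λ)‖q‖²`. Since `‖q‖ ≥ d(x,V) ≥ ε‖x‖` and
`λ(2-λ) ≥ 0`, this is at most `(1 - λ(2-λ)ε²)‖x‖²`. -/

theorem Real.le_sqrt_mul_of_sq_le_mul_sq {a b c : ℝ} (hb : 0 ≤ b) (h : a ^ 2 ≤ c * b ^ 2) :
    a ≤ √c * b :=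
  calc a ≤ |a| := le_abs_self a
    _ ≤ √(c * b ^ 2) := Real.abs_le_sqrt h
    _ = √c * b := by rw [Real.sqrt_mul' c (sq_nonneg b), Real.sqrt_sq hb]

section RelaxedProjection

variable {H : Type*} [NormedAddCommGroup H] [InnerProductSpace ℝ H]
  (V : Submodule ℝ H) [V.HasOrthogonalProjection]

theorem relaxProj_eq_sub_smul (l : ℝ) (x : H) :
    relaxProj V l x = x - l • (x - V.starProjection x) := by
  rw [relaxProj, Submodule.coe_orthogonalProjectionOnto_apply]
  module

theorem real_inner_sub_starProjection_self (x : H) :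
    ⟪x, x - V.starProjection x⟫_ℝ = ‖x - V.starProjection x‖ ^ 2 := by
  have horth : ⟪V.starProjection x, x - V.starProjection x⟫_ℝ = 0 := by
    rw [real_inner_comm]
    exact V.starProjection_inner_eq_zero x _ (V.starProjection_apply_mem x)
  rw [← real_inner_self_eq_norm_sq, inner_sub_left _ _ (x - V.starProjection x), horth, sub_zero]

theorem norm_relaxProj_sq (l : ℝ) (x : H) :
    ‖relaxProj V l x‖ ^ 2 = ‖x‖ ^ 2 - l * (2 - l) * ‖x - V.starProjection x‖ ^ 2 := by
  rw [relaxProj_eq_sub_smul, norm_sub_sq_real, real_inner_smul_right,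
    real_inner_sub_starProjection_self, norm_smul, mul_pow, Real.norm_eq_abs, sq_abs]
  ring

theorem infDist_le_norm_sub_starProjection (x : H) :
    infDist x (V : Set H) ≤ ‖x - V.starProjection x‖ := by
  simpa only [dist_eq_norm] using infDist_le_dist_of_mem (x := x) (V.starProjection_apply_mem x)

theorem norm_relaxProj_sq_le {l ε : ℝ} (hl : l ∈ Set.Icc (0 : ℝ) 2) (hε : 0 ≤ ε) {x : H}
    (hx : ε * ‖x‖ ≤ ‖x - V.starProjection x‖) :
    ‖relaxProj V l x‖ ^ 2 ≤ (1 - l * (2 - l) * ε ^ 2) * ‖x‖ ^ 2 := by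
  have hgain : 0 ≤ l * (2 - l) := mul_nonneg hl.1 (by linarith [hl.2])
  have hsq : (ε * ‖x‖) ^ 2 ≤ ‖x - V.starProjection x‖ ^ 2 :=
    pow_le_pow_left₀ (by positivity) hx 2
  rw [norm_relaxProj_sq]
  linarith [mul_le_mul_of_nonneg_left hsq hgain]

end RelaxedProjection

theorem stmt_8_general {H : Type*} [NormedAddCommGroup H] [InnerProductSpace ℝ H]
    (V : Submodule ℝ H) [CompleteSpace V]
    (l : ℝ) (hl : l ∈ Set.Icc (0 : ℝ) 2) (ε : ℝ) (hε : ε ∈ Set.Icc (0 : ℝ) 1) :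
    ∀ x : H, ε * ‖x‖ ≤ infDist x (V : Set H) →
      ‖relaxProj V l x‖ ≤ Real.sqrt (1 - l * (2 - l) * ε ^ 2) * ‖x‖ := fun x hx =>
  Real.le_sqrt_mul_of_sq_le_mul_sq (norm_nonneg x) <|
    norm_relaxProj_sq_le V hl hε.1 (hx.trans (infDist_le_norm_sub_starProjection V x))

/-- strict contraction of a relaxed projection away from the subspace. -/
theorem stmt_8 {H : Type*} [NormedAddCommGroup H] [InnerProductSpace ℝ H] [CompleteSpace H]
    (V : Submodule ℝ H) [CompleteSpace V]
    (l : ℝ) (hl : l ∈ Set.Icc (0 : ℝ) 2) (ε : ℝ) (hε : ε ∈ Set.Icc (0 : ℝ) 1) :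
    ∀ x : H, ε * ‖x‖ ≤ infDist x (V : Set H) →
      ‖relaxProj V l x‖ ≤ Real.sqrt (1 - l * (2 - l) * ε ^ 2) * ‖x‖ :=
  stmt_8_general V l hl ε hε
end
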